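/- Let ψ₁, …, ψ_r be linearly independent vectors in ℝ^N. Then there exist pairwise distinct indices p₁, …, p_r in {1, …, N} such that for every l with 1 ≤ l ≤ r, the l×l matrix with entries ψ_j(p_i) for 1 ≤ i, j ≤ l is invertible. -/

import Mathlib

/-!
Induct on `r`, extending a hierarchical index vector `p` for `ψ₁, …, ψ_r` by one index `q`.
Expanding the determinant of the bordered interpolation matrix along its new row `q` shows
that, as a function of `q`, it is a linear combination of `ψ₁, …, ψ_{r+1}` whose coefficient of
`ψ_{r+1}` is `± det` of the previous interpolation matrix, hence nonzero. By linear independence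
this combination is not the zero vector, so some `q` makes the bordered determinant nonzero.
Distinctness of the indices is automatic: equal indices would give equal rows.
-/

open Matrix

namespace DEIM

variable {K ι : Type*} [CommRing K]

def interpolationMatrix {m n : Type*} (ψ : m → ι → K) (p : n → ι) : Matrix n m K :=
  of fun i j => ψ j (p i)

def IsHierarchical {r : ℕ} (ψ : Fin r → ι → K) (p : Fin r → ι) : Prop :=
  ∀ (l : ℕ) (hl : l ≤ r), (interpolationMatrix (ψ ∘ Fin.castLE hl) (p ∘ Fin.castLE hl)).det ≠ 0

theorem injective_of_det_interpolationMatrix_ne_zero {n : Type*} [Fintype n] [DecidableEq n]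
    {ψ : n → ι → K} {p : n → ι} (h : (interpolationMatrix ψ p).det ≠ 0) :
    Function.Injective p := by
  intro a b hab
  by_contra hne
  exact h (det_zero_of_row_eq hne (funext fun j => by simp [interpolationMatrix, hab]))

theorem det_interpolationMatrix_snoc {r : ℕ} (ψ : Fin (r + 1) → ι → K) (p : Fin r → ι)
    (x : ι) :
    (interpolationMatrix ψ (Fin.snoc p x : Fin (r + 1) → ι)).det =
      ∑ j : Fin (r + 1),
        (-1) ^ (r + (j : ℕ)) * (interpolationMatrix (ψ ∘ j.succAbove) p).det * ψ j x := by
  rw [det_succ_row _ (Fin.last r)]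
  refine Finset.sum_congr rfl fun j _ => ?_
  simp only [interpolationMatrix, submatrix, of_apply, Fin.succAbove_last, Fin.snoc_castSucc,
    Fin.snoc_last, Fin.val_last, Function.comp_def]
  ring

theorem exists_det_interpolationMatrix_snoc_ne_zero {r : ℕ} {ψ : Fin (r + 1) → ι → K}
    (hψ : LinearIndependent K ψ) {p : Fin r → ι}
    (hp : (interpolationMatrix (ψ ∘ Fin.castSucc) p).det ≠ 0) :
    ∃ q, (interpolationMatrix ψ (Fin.snoc p q : Fin (r + 1) → ι)).det ≠ 0 := by
  by_contra! h
  set c : Fin (r + 1) → K :=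
    fun j => (-1) ^ (r + (j : ℕ)) * (interpolationMatrix (ψ ∘ j.succAbove) p).det
  have hcomb : ∑ j, c j • ψ j = 0 := funext fun x => by
    simpa [c, det_interpolationMatrix_snoc] using h x
  have hc_last := Fintype.linearIndependent_iff.mp hψ c hcomb (Fin.last r)
  simp only [c, Fin.val_last, Fin.succAbove_last] at hc_last
  exact hp (((isUnit_neg_one (α := K)).pow _).mul_right_eq_zero.mp hc_last)

theorem IsHierarchical.snoc {r : ℕ} {ψ : Fin (r + 1) → ι → K} {p : Fin r → ι} {q : ι}
    (hp : IsHierarchical (ψ ∘ Fin.castSucc) p)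
    (hq : (interpolationMatrix ψ (Fin.snoc p q : Fin (r + 1) → ι)).det ≠ 0) :
    IsHierarchical ψ (Fin.snoc p q : Fin (r + 1) → ι) := by
  intro l hl
  rcases Nat.lt_or_eq_of_le hl with hlt | rfl
  · convert hp l (Nat.le_of_lt_succ hlt) using 3 <;> funext i
    · rfl
    · exact Fin.snoc_castSucc (α := fun _ => ι) (p := p) (x := q) (i := Fin.castLE _ i)
  · exact hq

theorem exists_isHierarchical [Nontrivial K] {r : ℕ} {ψ : Fin r → ι → K}
    (hψ : LinearIndependent K ψ) :
    ∃ p : Fin r → ι, IsHierarchical ψ p := by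
  induction r with
  | zero => exact ⟨Fin.elim0, fun l hl => by obtain rfl := Nat.le_zero.mp hl; simp⟩
  | succ r ih =>
    obtain ⟨p, hp⟩ := ih (hψ.comp _ (Fin.castSucc_injective r))
    obtain ⟨q, hq⟩ := exists_det_interpolationMatrix_snoc_ne_zero hψ (hp r le_rfl)
    exact ⟨Fin.snoc p q, hp.snoc hq⟩

end DEIM

open DEIM in
/-- Overall well-posedness of DEIM index selection: for linearly independent
vectors `ψ 0, …, ψ (r-1)` in `ℝ^N`, there exist pairwise distinct indices
`p 0, …, p (r-1)` such that for every `l` with `1 ≤ l ≤ r`, the leading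
`l × l` interpolation matrix with entries `ψ j (p i)` (`i, j < l`) is
invertible. -/
theorem deim_indices_exist
    (N r : ℕ)
    (ψ : Fin r → (Fin N → ℝ))
    (hψ : LinearIndependent ℝ ψ) :
    ∃ p : Fin r → Fin N, Function.Injective p ∧
      ∀ (l : ℕ) (hl1 : 1 ≤ l) (hl : l ≤ r),
        IsUnit (Matrix.of fun (i j : Fin l) =>
          ψ (Fin.castLE hl j) (p (Fin.castLE hl i))) := by
  obtain ⟨p, hp⟩ := exists_isHierarchical hψ
  refine ⟨p, injective_of_det_interpolationMatrix_ne_zero (hp r le_rfl), fun l _ hl => ?_⟩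
  exact (isUnit_iff_isUnit_det _).mpr (hp l hl).isUnit
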